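/- arXiv:2201.09649 — 5 statements merged into one kernel-verified Lean document; each statement's English description precedes it below -/
import Mathlib

section
/- For every polynomial φ over a field K of degree k ≥ 2, there exists a unique polynomial ψ in three variables X, Y, Z over K such that φ(X+Y−Z) − φ(X) − φ(Y) + φ(Z) = (X−Z)(Y−Z)·ψ(X,Y,Z). -/
open MvPolynomial

private lemma X_dvd_sub_aeval_update {K : Type*} [CommRing K] (i : Fin 3)
    (p : MvPolynomial (Fin 3) K) :
    X i ∣ (p - MvPolynomial.aeval (Function.update (X : Fin 3 → MvPolynomial (Fin 3) K)  i 0) p) := by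
  induction p using MvPolynomial.induction_on with
  | C a => simp
  | add p q hp hq =>
    have : p + q - MvPolynomial.aeval (Function.update (X : Fin 3 → MvPolynomial (Fin 3) K)  i 0) (p + q)
        = (p - MvPolynomial.aeval (Function.update (X : Fin 3 → MvPolynomial (Fin 3) K)  i 0) p)
          + (q - MvPolynomial.aeval (Function.update (X : Fin 3 → MvPolynomial (Fin 3) K)  i 0) q) := by
      simp [map_add]; ring
    rw [this]
    exact dvd_add hp hq
  | mul_X p n hp =>
    rcases eq_or_ne n i with rfl | hn
    · have : p * X n - MvPolynomial.aeval (Function.update (X : Fin 3 → MvPolynomial (Fin 3) K)  n 0) (p * X n)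
          = p * X n := by simp [Function.update_self]
      rw [this]
      exact Dvd.intro_left p rfl
    · have : p * X n - MvPolynomial.aeval (Function.update (X : Fin 3 → MvPolynomial (Fin 3) K)  i 0) (p * X n)
          = (p - MvPolynomial.aeval (Function.update (X : Fin 3 → MvPolynomial (Fin 3) K)  i 0) p) * X n := by
        simp [Function.update_of_ne hn]; ring
      rw [this]
      exact hp.mul_right _

private lemma X_dvd_of_aeval_update_eq_zero {K : Type*} [CommRing K] (i : Fin 3)
    (p : MvPolynomial (Fin 3) K)
    (h : MvPolynomial.aeval (Function.update (X : Fin 3 → MvPolynomial (Fin 3) K)  i 0) p = 0) :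
    X i ∣ p := by
  have := X_dvd_sub_aeval_update i p
  rwa [h, sub_zero] at this

theorem sod_exists_unique (K : Type*) [Field K] (φ : Polynomial K)
    (hdeg : 2 ≤ φ.natDegree) :
    ∃! ψ : MvPolynomial (Fin 3) K,
      Polynomial.aeval (X 0 + X 1 - X 2 : MvPolynomial (Fin 3) K) φ
          - Polynomial.aeval (X 0 : MvPolynomial (Fin 3) K) φ
          - Polynomial.aeval (X 1 : MvPolynomial (Fin 3) K) φ
          + Polynomial.aeval (X 2 : MvPolynomial (Fin 3) K) φ
        = (X 0 - X 2) * (X 1 - X 2) * ψ := by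
  -- the "shifted" polynomial G
  set G : MvPolynomial (Fin 3) K :=
      Polynomial.aeval (X 0 + X 1 + X 2 : MvPolynomial (Fin 3) K) φ
        - Polynomial.aeval (X 0 + X 2 : MvPolynomial (Fin 3) K) φ
        - Polynomial.aeval (X 1 + X 2 : MvPolynomial (Fin 3) K) φ
        + Polynomial.aeval (X 2 : MvPolynomial (Fin 3) K) φ with hG
  -- evaluation at X 0 := 0 kills G
  have h0 : MvPolynomial.aeval (Function.update (X : Fin 3 → MvPolynomial (Fin 3) K)  0 0) G = 0 := by
    simp only [hG, map_add, map_sub, ← Polynomial.aeval_algHom_apply,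
      aeval_X, Function.update_self, Function.update_of_ne (by decide : (1 : Fin 3) ≠ 0),
      Function.update_of_ne (by decide : (2 : Fin 3) ≠ 0)]
    ring
  obtain ⟨H, hH⟩ := X_dvd_of_aeval_update_eq_zero 0 G h0
  -- evaluation at X 1 := 0 kills G, hence kills H
  have h1 : MvPolynomial.aeval (Function.update (X : Fin 3 → MvPolynomial (Fin 3) K)  1 0) G = 0 := by
    simp only [hG, map_add, map_sub, ← Polynomial.aeval_algHom_apply,
      aeval_X, Function.update_self, Function.update_of_ne (by decide : (0 : Fin 3) ≠ 1),
      Function.update_of_ne (by decide : (2 : Fin 3) ≠ 1)]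
    ring
  have h1' : MvPolynomial.aeval (Function.update (X : Fin 3 → MvPolynomial (Fin 3) K)  1 0) H = 0 := by
    have h1'' : X 0 * MvPolynomial.aeval
        (Function.update (X : Fin 3 → MvPolynomial (Fin 3) K)  1 0) H = 0 := by
      rw [hH, map_mul] at h1
      simpa [Function.update_of_ne (by decide : (0 : Fin 3) ≠ 1)] using h1
    exact (mul_eq_zero.mp h1'').resolve_left (X_ne_zero 0)
  obtain ⟨H', hH'⟩ := X_dvd_of_aeval_update_eq_zero 1 H h1'
  have hG2 : G = X 0 * X 1 * H' := by rw [hH, hH', mul_assoc]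
  -- the substitution σ : X0 ↦ X0 - X2, X1 ↦ X1 - X2, X2 ↦ X2
  set σ : MvPolynomial (Fin 3) K →ₐ[K] MvPolynomial (Fin 3) K :=
    MvPolynomial.aeval ![X 0 - X 2, X 1 - X 2, X 2] with hσ
  have hσ0 : σ (X 0) = X 0 - X 2 := by simp [hσ]
  have hσ1 : σ (X 1) = X 1 - X 2 := by simp [hσ]
  have hσ2 : σ (X 2) = X 2 := by simp [hσ]
  have key : Polynomial.aeval (X 0 + X 1 - X 2 : MvPolynomial (Fin 3) K) φ
          - Polynomial.aeval (X 0 : MvPolynomial (Fin 3) K) φ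
          - Polynomial.aeval (X 1 : MvPolynomial (Fin 3) K) φ
          + Polynomial.aeval (X 2 : MvPolynomial (Fin 3) K) φ
      = (X 0 - X 2) * (X 1 - X 2) * σ H' := by
    have := congrArg σ hG2
    rw [hG] at this
    simp only [map_add, map_sub, map_mul, ← Polynomial.aeval_algHom_apply,
      hσ0, hσ1, hσ2] at this
    rw [show (X 0 - X 2 + (X 1 - X 2) + X 2 : MvPolynomial (Fin 3) K)
          = X 0 + X 1 - X 2 by ring,
        show (X 0 - X 2 + X 2 : MvPolynomial (Fin 3) K) = X 0 by ring,
        show (X 1 - X 2 + X 2 : MvPolynomial (Fin 3) K) = X 1 by ring] at this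
    exact this
  refine ⟨σ H', key, ?_⟩
  intro ψ' hψ'
  have hne : ((X 0 - X 2) * (X 1 - X 2) : MvPolynomial (Fin 3) K) ≠ 0 := by
    apply mul_ne_zero <;>
      exact sub_ne_zero.mpr (fun h => by simpa using X_injective h)
  exact mul_left_cancel₀ hne (hψ'.symm.trans key)
end

section
/- Let φ be a polynomial of degree k ≥ 2 over a field K with second order differencing polynomial ψ. Then ψ(X,Y,X) = (φ'(Y) − φ'(X))/(Y − X), i.e. (Y − X)·ψ(X,Y,X) = φ'(Y) − φ'(X) as polynomials. -/
open MvPolynomial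

theorem sod_diagonal_derivative (K : Type*) [Field K] (φ : Polynomial K)
    (hdeg : 2 ≤ φ.natDegree)
    (ψ : MvPolynomial (Fin 3) K)
    (hψ : Polynomial.aeval (X 0 + X 1 - X 2 : MvPolynomial (Fin 3) K) φ
          - Polynomial.aeval (X 0 : MvPolynomial (Fin 3) K) φ
          - Polynomial.aeval (X 1 : MvPolynomial (Fin 3) K) φ
          + Polynomial.aeval (X 2 : MvPolynomial (Fin 3) K) φ
        = (X 0 - X 2) * (X 1 - X 2) * ψ) :
    (X 1 - X 0) * aeval (fun i : Fin 3 => if i = 1 then (X 1 : MvPolynomial (Fin 3) K) else X 0) ψ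
      = Polynomial.aeval (X 1 : MvPolynomial (Fin 3) K) (Polynomial.derivative φ)
        - Polynomial.aeval (X 0 : MvPolynomial (Fin 3) K) (Polynomial.derivative φ) := by
  have h := congrArg (pderiv (0 : Fin 3)) hψ
  simp only [map_sub, map_add, Derivation.map_aeval, pderiv_mul, pderiv_X_self,
    pderiv_X_of_ne (show (1 : Fin 3) ≠ 0 by decide),
    pderiv_X_of_ne (show (2 : Fin 3) ≠ 0 by decide), smul_eq_mul] at h
  have h2 := congrArg (aeval (fun i : Fin 3 => if i = 1 then (X 1 : MvPolynomial (Fin 3) K) else X 0)) h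
  simp only [map_sub, map_add, map_mul, map_one, map_zero, mul_zero, mul_one, add_zero,
    ← Polynomial.aeval_algHom_apply, aeval_X, ← aeval_eq_bind₁, if_true, eq_self_iff_true,
    if_pos rfl, if_neg (show (0:Fin 3) ≠ 1 by decide), if_neg (show (2:Fin 3) ≠ 1 by decide),
    sub_self, zero_mul, add_sub_cancel_left] at h2
  linear_combination -h2
end

section
/- Let k ≥ 2 and let φ : ℝ → ℝ be k times continuously differentiable on an interval I with φ^(k)(t) ≠ 0 for all t ∈ I. Suppose t₁, t₁' ∈ I with t₁ ≠ t₁' and t₁ + Y − t₁' ∈ I for all relevant Y. Then the function f(Y) := φ(t₁ + Y − t₁') − φ(t₁) − φ(Y) + φ(t₁') has at most k − 1 distinct zeros in I. -/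
/-! With `s = t₁ - t₁'`, the zeros of `f` are the solutions of `φ (y + s) - φ y = φ t₁ - φ t₁'`.
By Rolle's theorem, between two solutions of `ψ (y + s) - ψ y = c` lies a solution of
`ψ' (y + s) - ψ' y = 0`, so each differentiation loses at most one solution. After `k - 1`
differentiations none is left: `φ⁽ᵏ⁻¹⁾ (y + s) = φ⁽ᵏ⁻¹⁾ y` would give a zero of `φ⁽ᵏ⁾` between
`y` and `y + s`. -/

open Set

theorem exists_finset_deriv_eq_zero_card_ge {f : ℝ → ℝ} {a b c : ℝ}
    (hf : ContinuousOn f (Icc a b)) (S : Finset ℝ) (hS : ∀ x ∈ S, x ∈ Icc a b ∧ f x = c) :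
    ∃ T : Finset ℝ, (∀ x ∈ T, x ∈ Ioo a b ∧ deriv f x = 0) ∧ S.card ≤ T.card + 1 := by
  have hRolle : ∀ p : ℝ × ℝ, ∃ z, p.1 ∈ S → p.2 ∈ S → p.1 < p.2 →
      z ∈ Ioo p.1 p.2 ∧ deriv f z = 0 := by
    rintro ⟨x, y⟩
    by_cases h : x ∈ S ∧ y ∈ S ∧ x < y
    · obtain ⟨hx, hy, hxy⟩ := h
      obtain ⟨z, hz, hdz⟩ := exists_deriv_eq_zero hxy
        (hf.mono (Icc_subset_Icc (hS x hx).1.1 (hS y hy).1.2)) ((hS x hx).2.trans (hS y hy).2.symm)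
      exact ⟨z, fun _ _ _ => ⟨hz, hdz⟩⟩
    · exact ⟨0, fun hx hy hxy => absurd ⟨hx, hy, hxy⟩ h⟩
  choose r hr using hRolle
  refine ⟨((S ×ˢ S).filter fun p => p.1 < p.2).image r, ?_, ?_⟩
  · simp only [Finset.mem_image, Finset.mem_filter, Finset.mem_product]
    rintro _ ⟨⟨x, y⟩, ⟨⟨hx, hy⟩, hxy⟩, rfl⟩
    obtain ⟨⟨hxz, hzy⟩, hdz⟩ := hr (x, y) hx hy hxy
    exact ⟨⟨(hS x hx).1.1.trans_lt hxz, hzy.trans_le (hS y hy).1.2⟩, hdz⟩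
  · refine Finset.card_le_of_interleaved fun x hx y hy hxy _ => ?_
    exact ⟨r (x, y), Finset.mem_image_of_mem _ (by simp [hx, hy, hxy]), hr (x, y) hx hy hxy |>.1⟩

theorem hasDerivAt_comp_add_const_sub {ψ : ℝ → ℝ} {a b s u : ℝ}
    (hψ : DifferentiableOn ℝ ψ (Icc a b)) (hu : u ∈ Ioo a b) (hus : u + s ∈ Ioo a b) :
    HasDerivAt (fun y => ψ (y + s) - ψ y)
      (derivWithin ψ (Icc a b) (u + s) - derivWithin ψ (Icc a b) u) u := by
  have hus' : Icc a b ∈ nhds (u + s) := Icc_mem_nhds hus.1 hus.2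
  have hu' : Icc a b ∈ nhds u := Icc_mem_nhds hu.1 hu.2
  rw [derivWithin_of_mem_nhds hus', derivWithin_of_mem_nhds hu']
  exact ((hψ.differentiableAt hus').hasDerivAt.comp_add_const u s).sub
    (hψ.differentiableAt hu').hasDerivAt

theorem exists_finset_shift_deriv_eq_card_ge {ψ : ℝ → ℝ} {a b s c : ℝ}
    (hψ : DifferentiableOn ℝ ψ (Icc a b)) (S : Finset ℝ)
    (hS : ∀ y ∈ S, y ∈ Icc a b ∧ y + s ∈ Icc a b ∧ ψ (y + s) - ψ y = c) :
    ∃ T : Finset ℝ, (∀ u ∈ T, u ∈ Icc a b ∧ u + s ∈ Icc a b ∧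
      derivWithin ψ (Icc a b) (u + s) - derivWithin ψ (Icc a b) u = 0) ∧
      S.card ≤ T.card + 1 := by
  have hdom : Icc (max a (a - s)) (min b (b - s)) = Icc a b ∩ (· + s) ⁻¹' Icc a b := by
    rw [preimage_add_const_Icc, Icc_inter_Icc]
  have hcont : ContinuousOn (fun y => ψ (y + s) - ψ y) (Icc (max a (a - s)) (min b (b - s))) := by
    rw [hdom]
    exact (hψ.continuousOn.comp (continuous_add_const s).continuousOn fun y hy => hy.2).sub
      (hψ.continuousOn.mono inter_subset_left)
  obtain ⟨T, hT, hcard⟩ := exists_finset_deriv_eq_zero_card_ge hcont S fun y hy =>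
    ⟨hdom ▸ ⟨(hS y hy).1, (hS y hy).2.1⟩, (hS y hy).2.2⟩
  refine ⟨T, fun u huT => ?_, hcard⟩
  obtain ⟨⟨hau, hasu⟩, hub, hubs⟩ := by
    simpa only [mem_Ioo, max_lt_iff, lt_min_iff] using (hT u huT).1
  have hu : u ∈ Ioo a b := ⟨hau, hub⟩
  have hus : u + s ∈ Ioo a b := ⟨by linarith, by linarith⟩
  exact ⟨Ioo_subset_Icc_self hu, Ioo_subset_Icc_self hus,
    (hasDerivAt_comp_add_const_sub hψ hu hus).deriv ▸ (hT u huT).2⟩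

theorem apply_add_ne_of_derivWithin_ne_zero {ψ : ℝ → ℝ} {a b s : ℝ} (hs : s ≠ 0)
    (hψ : DifferentiableOn ℝ ψ (Icc a b)) (hψ' : ∀ t ∈ Icc a b, derivWithin ψ (Icc a b) t ≠ 0)
    {y : ℝ} (hy : y ∈ Icc a b) (hys : y + s ∈ Icc a b) : ψ (y + s) ≠ ψ y := by
  intro heq
  have hlt : min y (y + s) < max y (y + s) := min_lt_max.2 (by simpa using hs)
  have heq' : ψ (min y (y + s)) = ψ (max y (y + s)) := by
    rcases le_total y (y + s) with h | h <;> simp [h, heq]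
  obtain ⟨z, hz, hdz⟩ := exists_deriv_eq_zero hlt
    (hψ.continuousOn.mono (Icc_subset_Icc (le_min hy.1 hys.1) (max_le hy.2 hys.2))) heq'
  have hzab : Icc a b ∈ nhds z :=
    Icc_mem_nhds ((le_min hy.1 hys.1).trans_lt hz.1) (hz.2.trans_le (max_le hy.2 hys.2))
  exact hψ' z (mem_of_mem_nhds hzab) ((derivWithin_of_mem_nhds hzab).trans hdz)

theorem card_shift_level_set_le {a b s c : ℝ} (hab : a < b) (hs : s ≠ 0) (n : ℕ) {ψ : ℝ → ℝ}
    (hψ : ContDiffOn ℝ (n + 2) ψ (Icc a b))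
    (hnd : ∀ t ∈ Icc a b, iteratedDerivWithin (n + 2) ψ (Icc a b) t ≠ 0) (S : Finset ℝ)
    (hS : ∀ y ∈ S, y ∈ Icc a b ∧ y + s ∈ Icc a b ∧ ψ (y + s) - ψ y = c) :
    S.card ≤ n + 1 := by
  induction n generalizing ψ c S with
  | zero =>
    obtain ⟨T, hT, hcard⟩ :=
      exists_finset_shift_deriv_eq_card_ge (hψ.differentiableOn (by simp)) S hS
    have hψ' : DifferentiableOn ℝ (derivWithin ψ (Icc a b)) (Icc a b) :=
      (hψ.derivWithin (m := 1) (uniqueDiffOn_Icc hab) (by norm_num)).differentiableOn (by simp)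
    have hT_empty : T = ∅ := Finset.eq_empty_of_forall_notMem fun u hu =>
      apply_add_ne_of_derivWithin_ne_zero hs hψ'
        (fun t ht => by simpa [iteratedDerivWithin_succ'] using hnd t ht)
        (hT u hu).1 (hT u hu).2.1 (sub_eq_zero.1 (hT u hu).2.2)
    simpa [hT_empty] using hcard
  | succ n ih =>
    obtain ⟨T, hT, hcard⟩ :=
      exists_finset_shift_deriv_eq_card_ge (hψ.differentiableOn (by simp)) S hS
    have := ih (hψ.derivWithin (uniqueDiffOn_Icc hab) (by push_cast; rfl))
      (fun t ht => iteratedDerivWithin_succ' (f := ψ) ▸ hnd t ht) T hT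
    omega

theorem sod_function_zeros_bound_general (k : ℕ) (hk : 2 ≤ k) (a b : ℝ) (hab : a < b)
    (φ : ℝ → ℝ) (hφ : ContDiffOn ℝ k φ (Set.Icc a b))
    (hnd : ∀ t ∈ Set.Icc a b, iteratedDerivWithin k φ (Set.Icc a b) t ≠ 0)
    (t₁ t₁' : ℝ) (hne : t₁ ≠ t₁')
    (S : Finset ℝ)
    (hS : ∀ y ∈ S, y ∈ Set.Icc a b ∧ t₁ + y - t₁' ∈ Set.Icc a b ∧
      φ (t₁ + y - t₁') - φ t₁ - φ y + φ t₁' = 0) :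
    S.card ≤ k - 1 := by
  obtain ⟨n, rfl⟩ : ∃ n, k = n + 2 := ⟨k - 2, by omega⟩
  refine (card_shift_level_set_le (c := φ t₁ - φ t₁') hab (sub_ne_zero.2 hne) n
    (by exact_mod_cast hφ) hnd S fun y hy => ?_).trans (by omega)
  rw [show y + (t₁ - t₁') = t₁ + y - t₁' by ring]
  exact ⟨(hS y hy).1, (hS y hy).2.1, by linarith [(hS y hy).2.2]⟩

theorem sod_function_zeros_bound (k : ℕ) (hk : 2 ≤ k) (a b : ℝ) (hab : a < b)
    (φ : ℝ → ℝ) (hφ : ContDiffOn ℝ k φ (Set.Icc a b))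
    (hnd : ∀ t ∈ Set.Icc a b, iteratedDerivWithin k φ (Set.Icc a b) t ≠ 0)
    (t₁ t₁' : ℝ) (ht₁ : t₁ ∈ Set.Icc a b) (ht₁' : t₁' ∈ Set.Icc a b) (hne : t₁ ≠ t₁')
    (S : Finset ℝ)
    (hS : ∀ y ∈ S, y ∈ Set.Icc a b ∧ t₁ + y - t₁' ∈ Set.Icc a b ∧
      φ (t₁ + y - t₁') - φ t₁ - φ y + φ t₁' = 0) :
    S.card ≤ k - 1 :=
  sod_function_zeros_bound_general k hk a b hab φ hφ hnd t₁ t₁' hne S hS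
end

section
/- Let k ≥ 4 and p an odd prime with p ≡ 1 (mod k−2), and assume either k = p+1 or (k−1) is not a (k−2)-th power residue mod p. Then φ(X) = 2X^k − kX² satisfies |φ''(x)|_p ≥ 1 for all x ∈ ℤ_p. -/
theorem padic_nondegenerate_2Xk (k p : ℕ) [Fact p.Prime] (hk : 4 ≤ k) (hodd : Odd p)
    (hcong : p % (k - 2) = 1)
    (hcase : k = p + 1 ∨ ¬ ∃ y : ZMod p, y ^ (k - 2) = (k - 1 : ZMod p))
    (φ : Polynomial ℤ_[p])
    (hφ : φ = Polynomial.C 2 * Polynomial.X ^ k - Polynomial.C (k : ℤ_[p]) * Polynomial.X ^ 2) :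
    ∀ x : ℤ_[p], 1 ≤ ‖(Polynomial.derivative (Polynomial.derivative φ)).eval x‖ := by
  intro x
  have hp := (Fact.out : p.Prime)
  have hp2 := hp.two_le
  have hpne2 : p ≠ 2 := by rintro rfl; exact (by decide : ¬ Odd 2) hodd
  -- p does not divide k
  have hpk : ¬ p ∣ k := by
    intro hdvd
    have hmod : p = (k - 2) * (p / (k - 2)) + 1 := by
      conv_lhs => rw [← Nat.div_add_mod p (k - 2)]
      rw [hcong]
    have hple : p ≤ k := Nat.le_of_dvd (by omega) hdvd
    set m := p / (k - 2) with hm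
    have hm1 : m ≤ 1 := by
      by_contra h
      push_neg at h
      have : (k - 2) * 2 ≤ (k - 2) * m := Nat.mul_le_mul_left _ h
      omega
    interval_cases m
    · omega
    · -- p = k - 1 and p ∣ k, so p ∣ 1
      have h1 : p ∣ k - p := Nat.dvd_sub hdvd dvd_rfl
      have : k - p = 1 := by omega
      rw [this] at h1
      have := Nat.le_of_dvd one_pos h1
      omega
  -- evaluate the second derivative
  have h1 : k - 1 - 1 = k - 2 := by omega
  have heval : (Polynomial.derivative (Polynomial.derivative φ)).eval x
      = 2 * (k : ℤ_[p]) * (((k - 1 : ℕ) : ℤ_[p]) * x ^ (k - 2)) - 2 * k := by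
    subst hφ
    simp only [map_sub, map_add, Polynomial.derivative_C_mul, Polynomial.derivative_X_pow,
      map_natCast, Polynomial.derivative_natCast_mul, Polynomial.derivative_mul,
      Polynomial.derivative_natCast, Polynomial.derivative_C, Polynomial.derivative_ofNat,
      Polynomial.derivative_X, mul_one, zero_mul, mul_zero, zero_add, add_zero,
      Polynomial.eval_sub, Polynomial.eval_add, Polynomial.eval_mul, Polynomial.eval_pow,
      Polynomial.eval_C, Polynomial.eval_X, Polynomial.eval_natCast, Polynomial.eval_ofNat, h1]
    ring
  -- the residue of v is nonzero
  set y := PadicInt.toZMod x with hy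
  have hmap : PadicInt.toZMod ((Polynomial.derivative (Polynomial.derivative φ)).eval x)
      = 2 * (k : ZMod p) * (((k : ZMod p) - 1) * y ^ (k - 2)) - 2 * k := by
    rw [heval]
    have : ((k - 1 : ℕ) : ZMod p) = (k : ZMod p) - 1 := by
      rw [Nat.cast_sub (by omega)]; norm_num
    simp only [map_sub, map_mul, map_pow, map_natCast, map_ofNat, this, hy]
  have h2ne : (2 : ZMod p) ≠ 0 := by
    intro h
    have : ((2 : ℕ) : ZMod p) = 0 := by push_cast; exact h
    have := (ZMod.natCast_eq_zero_iff 2 p).mp this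
    exact hpne2 ((Nat.prime_dvd_prime_iff_eq hp Nat.prime_two).mp this)
  have hkne : ((k : ℕ) : ZMod p) ≠ 0 := fun h =>
    hpk ((ZMod.natCast_eq_zero_iff k p).mp h)
  have hres : PadicInt.toZMod ((Polynomial.derivative (Polynomial.derivative φ)).eval x) ≠ 0 := by
    rw [hmap]
    intro h
    have hkey : ((k : ZMod p) - 1) * y ^ (k - 2) = 1 := by
      have h2k : (2 : ZMod p) * k ≠ 0 := mul_ne_zero h2ne hkne
      have : (2 : ZMod p) * k * (((k : ZMod p) - 1) * y ^ (k - 2) - 1) = 0 := by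
        rw [mul_sub]; rw [sub_eq_zero] at h ⊢; rw [h]; ring
      have := (mul_eq_zero.mp this).resolve_left h2k
      rwa [sub_eq_zero] at this
    rcases hcase with hk1 | hn
    · -- k = p + 1 : then k - 1 = 0 in ZMod p
      have : ((k : ZMod p) - 1) = 0 := by
        subst hk1; push_cast [ZMod.natCast_self]; ring
      rw [this, zero_mul] at hkey
      exact zero_ne_one hkey
    · have hyne : y ≠ 0 := by
        intro h0
        rw [h0, zero_pow (by omega : k - 2 ≠ 0), mul_zero] at hkey
        exact zero_ne_one hkey
      refine hn ⟨y⁻¹, ?_⟩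
      rw [inv_pow]
      exact ((eq_inv_of_mul_eq_one_left hkey).symm)
  -- conclude
  by_contra hlt
  push_neg at hlt
  obtain ⟨c, hc⟩ := (PadicInt.norm_lt_one_iff_dvd _).mp hlt
  apply hres
  rw [hc, map_mul, map_natCast, ZMod.natCast_self, zero_mul]
end

section
/- Let k ≥ 4 and p an odd prime with p ≡ 1 (mod k−2), and assume either k = p+1 or (k−1) is not a (k−2)-th power residue mod p. Let φ(X) = 2X^k − kX² with second order differencing polynomial ψ(X,Y,Z). Then for all x, z ∈ pℤ_p the univariate polynomial Y ↦ ψ(x,Y,z) has k−2 distinct roots in ℤ_p (it splits completely over ℤ_p). -/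
/-!
Write `a = X − Z`, `b = Y − Z`, `c = Z`. Binomial expansion of
`φ(a + b + c) − φ(a + c) − φ(b + c) + φ(c)` exhibits `ψ` as `2 Q_k(a, b, c) − 2k` for a polynomial
`Q_k` with integer coefficients. Hence for `x, z ∈ ℤ_p` the polynomial `ψ(x, Y, z)` has coefficients
in `ℤ_p`, and for `x ≡ z ≡ 0 (mod p)` it reduces to `2k (Y^(k−2) − 1)`, because
`Q_k(0, b, 0) = k b^(k−2)`. As `(k − 2) ∣ (p − 1)`, `Y^(k−2) − 1` has `k − 2` roots in `𝔽_p`; they are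
simple since `p ≡ 1 (mod k − 2)` forces `p > k − 2` and `p ∤ 2k`, so Hensel's lemma lifts each of
them to a root in `ℤ_p`.
-/

open MvPolynomial

section SecondDifference

open Finset

variable {R : Type*} [CommRing R]

/-- `((a + b)^j − a^j − b^j + 0^j) / (a b)`; the term `0^j` makes the identity below hold for
`j = 0` as well. -/
def powDiffQuot : ℕ → R → R → R
  | 0, _, _ => 0
  | 1, _, _ => 0
  | j + 2, a, b => ∑ i ∈ range (j + 1), ((j + 2).choose (i + 1) : R) * a ^ i * b ^ (j - i)

theorem add_pow_sub_pow_sub_pow_add_zero_pow (j : ℕ) (a b : R) :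
    (a + b) ^ j - a ^ j - b ^ j + 0 ^ j = a * b * powDiffQuot j a b := by
  match j with
  | 0 => simp [powDiffQuot]
  | 1 => simp [powDiffQuot]
  | j + 2 =>
    rw [add_pow, sum_range_succ, sum_range_succ', powDiffQuot, mul_sum]
    have hmid : ∀ i ∈ range (j + 1),
        a ^ (i + 1) * b ^ (j + 2 - (i + 1)) * ((j + 2).choose (i + 1) : R)
          = a * b * (((j + 2).choose (i + 1) : R) * a ^ i * b ^ (j - i)) := by
      intro i hi
      rw [show j + 2 - (i + 1) = j - i + 1 by grind]
      ring
    rw [sum_congr rfl hmid]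
    simp

theorem powDiffQuot_zero_left (j : ℕ) (b : R) : powDiffQuot (j + 2) 0 b = (j + 2) * b ^ j := by
  simp [powDiffQuot, sum_range_succ']

/-- `((a + b + c)^n − (a + c)^n − (b + c)^n + c^n) / (a b)`, expanded in powers of `c`. -/
def secondDiffQuot (n : ℕ) (a b c : R) : R :=
  ∑ j ∈ range (n + 1), powDiffQuot j a b * c ^ (n - j) * (n.choose j : R)

theorem add_add_pow_sub_add_pow_sub_add_pow_add_pow (n : ℕ) (a b c : R) :
    (a + b + c) ^ n - (a + c) ^ n - (b + c) ^ n + c ^ n = a * b * secondDiffQuot n a b c := by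
  rw [show c ^ n = (0 + c) ^ n by rw [zero_add], add_pow (a + b), add_pow a, add_pow b, add_pow 0,
    secondDiffQuot, mul_sum, ← sum_sub_distrib, ← sum_sub_distrib, ← sum_add_distrib]
  refine sum_congr rfl fun j _ => ?_
  linear_combination c ^ (n - j) * (n.choose j : R) * add_pow_sub_pow_sub_pow_add_zero_pow j a b

theorem secondDiffQuot_zero_zero (n : ℕ) (b : R) :
    secondDiffQuot n 0 b 0 = powDiffQuot n 0 b := by
  rw [secondDiffQuot, sum_range_succ, sum_eq_zero]
  · simp
  · intro j hj
    simp [zero_pow (Nat.sub_ne_zero_of_lt (mem_range.1 hj))]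

theorem map_secondDiffQuot {S F : Type*} [CommRing S] [FunLike F R S] [RingHomClass F R S]
    (f : F) (n : ℕ) (a b c : R) :
    f (secondDiffQuot n a b c) = secondDiffQuot n (f a) (f b) (f c) := by
  have hpow : ∀ j, f (powDiffQuot j a b) = powDiffQuot j (f a) (f b) := by
    rintro (_ | _ | j) <;> simp [powDiffQuot]
  simp [secondDiffQuot, hpow]

end SecondDifference

theorem eq_secondDiffQuot_of_secondDiff_eq {R : Type*} [CommRing R] [IsDomain R] (k : ℕ)
    (φ : Polynomial R)
    (hφ : φ = Polynomial.C 2 * Polynomial.X ^ k - Polynomial.C (k : R) * Polynomial.X ^ 2)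
    (ψ : MvPolynomial (Fin 3) R)
    (hψ : Polynomial.aeval (X 0 + X 1 - X 2 : MvPolynomial (Fin 3) R) φ
          - Polynomial.aeval (X 0 : MvPolynomial (Fin 3) R) φ
          - Polynomial.aeval (X 1 : MvPolynomial (Fin 3) R) φ
          + Polynomial.aeval (X 2 : MvPolynomial (Fin 3) R) φ
        = (X 0 - X 2) * (X 1 - X 2) * ψ) :
    ψ = 2 * secondDiffQuot k (X 0 - X 2) (X 1 - X 2) (X 2) - 2 * (k : MvPolynomial (Fin 3) R) := by
  have hX (i j : Fin 3) (h : i ≠ j) : (X i - X j : MvPolynomial (Fin 3) R) ≠ 0 :=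
    sub_ne_zero.2 (X_injective.ne h)
  refine mul_left_cancel₀ (mul_ne_zero (hX 0 2 (by decide)) (hX 1 2 (by decide))) ?_
  have hpow := add_add_pow_sub_add_pow_sub_add_pow_add_pow k
    (X 0 - X 2 : MvPolynomial (Fin 3) R) (X 1 - X 2) (X 2)
  rw [← hψ, hφ]
  simp only [map_sub, map_mul, map_pow, Polynomial.aeval_X, map_natCast, map_ofNat]
  linear_combination 2 * hpow

section Slice

variable {R S : Type*} [CommRing R] [CommRing S]

/-- The polynomial `Y ↦ ψ(x, Y, z)`. -/
noncomputable def secondDiffSlice (k : ℕ) (x z : R) : Polynomial R :=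
  2 * secondDiffQuot k (Polynomial.C x - Polynomial.C z) (Polynomial.X - Polynomial.C z)
    (Polynomial.C z) - 2 * k

theorem aeval_secondDiffQuot_eq_secondDiffSlice (k : ℕ) (x z : R) :
    aeval (fun i : Fin 3 => if i = 0 then Polynomial.C x
        else if i = 1 then Polynomial.X else Polynomial.C z)
      (2 * secondDiffQuot k (X 0 - X 2) (X 1 - X 2) (X 2) - 2 * (k : MvPolynomial (Fin 3) R)) =
      secondDiffSlice k x z := by
  simp [secondDiffSlice, map_secondDiffQuot]

theorem map_secondDiffSlice (f : R →+* S) (k : ℕ) (x z : R) :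
    (secondDiffSlice k x z).map f = secondDiffSlice k (f x) (f z) := by
  simp only [secondDiffSlice, ← Polynomial.coe_mapRingHom, map_sub, map_mul, map_ofNat,
    map_natCast, map_secondDiffQuot]
  simp

theorem secondDiffSlice_zero_zero (m : ℕ) :
    secondDiffSlice (m + 2) (0 : R) 0
      = Polynomial.C (2 * (m + 2) : R) * (Polynomial.X ^ m - 1) := by
  simp [secondDiffSlice, secondDiffQuot_zero_zero, powDiffQuot_zero_left, map_ofNat]
  ring

end Slice

theorem Nat.Prime.two_le_of_mod_eq_one {p m : ℕ} (hp : p.Prime) (h : p % m = 1) : 2 ≤ m := by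
  rcases m with _ | _ | m
  · exact absurd (by simpa using h) hp.ne_one
  · omega
  · omega

theorem Nat.Prime.not_dvd_two_mul_add_two_mul_of_mod_eq_one {p m : ℕ} (hp : p.Prime)
    (h : p % m = 1) : ¬ p ∣ 2 * (m + 2) * m := by
  have hm := hp.two_le_of_mod_eq_one h
  obtain ⟨q, hq⟩ : ∃ q, p = m * q + 1 := ⟨p / m, by rw [← h, Nat.div_add_mod]⟩
  have hq0 : 1 ≤ q := by
    by_contra! hq0
    simp [Nat.lt_one_iff.1 hq0, hp.ne_one] at hq
  simp only [hp.dvd_mul, not_or]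
  refine ⟨⟨fun h2 => ?_, fun hm2 => ?_⟩, fun hm' => ?_⟩
  · nlinarith [Nat.le_of_dvd two_pos h2]
  · obtain rfl : q = 1 := by nlinarith [Nat.le_of_dvd (by omega) hm2]
    rw [hq, mul_one] at hm2
    have := Nat.le_of_dvd one_pos ((Nat.dvd_add_right dvd_rfl).1 (hm2 : m + 1 ∣ m + 1 + 1))
    omega
  · nlinarith [Nat.le_of_dvd (by omega) hm']

theorem ZMod.two_mul_add_two_mul_ne_zero_of_mod_eq_one {p m : ℕ} [hp : Fact p.Prime]
    (h : p % m = 1) : (2 * (m + 2) * m : ZMod p) ≠ 0 := by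
  exact_mod_cast (ZMod.natCast_eq_zero_iff _ p).not.2
    (hp.out.not_dvd_two_mul_add_two_mul_of_mod_eq_one h)

theorem ZMod.exists_isPrimitiveRoot_of_dvd {p m : ℕ} [Fact p.Prime] (hm : m ∣ p - 1) :
    ∃ ζ : ZMod p, IsPrimitiveRoot ζ m := by
  obtain ⟨g, hg⟩ := IsCyclic.exists_ofOrder_eq_natCard (α := (ZMod p)ˣ)
  obtain ⟨q, hq⟩ := hm
  have hord : orderOf (g : ZMod p) = q * m := by
    rw [orderOf_units, hg, Nat.card_eq_fintype_card, ZMod.card_units, hq, mul_comm]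
  refine ⟨_, (IsPrimitiveRoot.orderOf (g : ZMod p)).pow ?_ hord⟩
  rw [orderOf_units]
  exact orderOf_pos g

theorem Polynomial.eval_derivative_C_mul_X_pow_sub_one_ne_zero {R : Type*} [CommRing R]
    [IsDomain R] {c r : R} {m : ℕ} (hcm : c * m ≠ 0) (hr : r ^ m = 1) :
    (C c * (X ^ m - 1)).derivative.eval r ≠ 0 := by
  have hm : m ≠ 0 := by rintro rfl; simp at hcm
  have hr0 : r ≠ 0 := (IsUnit.of_pow_eq_one hr hm).ne_zero
  simpa [derivative_X_pow, mul_assoc] using mul_ne_zero hcm (pow_ne_zero (m - 1) hr0)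

namespace PadicInt

open Polynomial

variable {p : ℕ} [Fact p.Prime]

theorem toZMod_eq_zero_iff_norm_lt_one (u : ℤ_[p]) : toZMod u = 0 ↔ ‖u‖ < 1 := by
  rw [← RingHom.mem_ker, ker_toZMod, IsLocalRing.mem_maximalIdeal, mem_nonunits]

theorem exists_isRoot_toZMod_eq {F : ℤ_[p][X]} {r : ZMod p} (hr : (F.map toZMod).IsRoot r)
    (hr' : (F.map toZMod).derivative.eval r ≠ 0) : ∃ y, F.IsRoot y ∧ toZMod y = r := by
  obtain ⟨a, rfl⟩ := ZMod.ringHom_surjective toZMod r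
  rw [IsRoot, eval_map_apply, toZMod_eq_zero_iff_norm_lt_one] at hr
  rw [derivative_map, eval_map_apply, Ne, toZMod_eq_zero_iff_norm_lt_one, not_lt] at hr'
  have hunit : ‖F.derivative.eval a‖ = 1 := le_antisymm (norm_le_one _) hr'
  obtain ⟨y, hy, hya, -⟩ := hensels_lemma (F := F) (a := a) (by simpa [hunit] using hr)
  refine ⟨y, by simpa using hy, ?_⟩
  rw [← sub_eq_zero, ← map_sub, toZMod_eq_zero_iff_norm_lt_one]
  simpa [hunit] using hya

theorem exists_finset_isRoot_of_simple_roots (F : ℤ_[p][X]) (T : Finset (ZMod p))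
    (hT : ∀ r ∈ T, (F.map toZMod).IsRoot r ∧ (F.map toZMod).derivative.eval r ≠ 0) :
    ∃ S : Finset ℤ_[p], S.card = T.card ∧ ∀ y ∈ S, F.IsRoot y := by
  classical
  choose! lift hlift using fun r hr => exists_isRoot_toZMod_eq (hT r hr).1 (hT r hr).2
  refine ⟨T.image lift, Finset.card_image_of_injOn fun r hr s hs h => ?_, ?_⟩
  · rw [← (hlift r hr).2, ← (hlift s hs).2, h]
  · simp only [Finset.mem_image, forall_exists_index, and_imp]
    rintro _ r hr rfl
    exact (hlift r hr).1

end PadicInt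

theorem padic_sod_splits_general (k p : ℕ) [Fact p.Prime]
    (hcong : p % (k - 2) = 1)
    (φ : Polynomial ℚ_[p])
    (hφ : φ = Polynomial.C 2 * Polynomial.X ^ k - Polynomial.C (k : ℚ_[p]) * Polynomial.X ^ 2)
    (ψ : MvPolynomial (Fin 3) ℚ_[p])
    (hψ : Polynomial.aeval (X 0 + X 1 - X 2 : MvPolynomial (Fin 3) ℚ_[p]) φ
          - Polynomial.aeval (X 0 : MvPolynomial (Fin 3) ℚ_[p]) φ
          - Polynomial.aeval (X 1 : MvPolynomial (Fin 3) ℚ_[p]) φ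
          + Polynomial.aeval (X 2 : MvPolynomial (Fin 3) ℚ_[p]) φ
        = (X 0 - X 2) * (X 1 - X 2) * ψ) :
    ∀ x z : ℤ_[p], (∃ x' : ℤ_[p], x = p * x') → (∃ z' : ℤ_[p], z = p * z') →
      ∃ S : Finset ℤ_[p], S.card = k - 2 ∧ ∀ y ∈ S,
        Polynomial.eval (y : ℚ_[p])
          (aeval (fun i : Fin 3 => if i = 0 then Polynomial.C (x : ℚ_[p])
            else if i = 1 then (Polynomial.X : Polynomial ℚ_[p])
            else Polynomial.C (z : ℚ_[p])) ψ) = 0 := by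
  have hm := (Fact.out : p.Prime).two_le_of_mod_eq_one hcong
  obtain ⟨m, rfl⟩ : ∃ m, k = m + 2 := ⟨k - 2, by omega⟩
  rw [Nat.add_sub_cancel] at hcong hm ⊢
  rintro x z ⟨x', rfl⟩ ⟨z', rfl⟩
  set F := secondDiffSlice (m + 2) ((p : ℤ_[p]) * x') ((p : ℤ_[p]) * z')
  have hF : F.map PadicInt.toZMod
      = Polynomial.C (2 * (m + 2) : ZMod p) * (Polynomial.X ^ m - 1) := by
    simp [F, map_secondDiffSlice, secondDiffSlice_zero_zero]
  obtain ⟨ζ, hζ⟩ := ZMod.exists_isPrimitiveRoot_of_dvd (hcong ▸ Nat.dvd_sub_mod p)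
  obtain ⟨S, hS, hroots⟩ := PadicInt.exists_finset_isRoot_of_simple_roots F
    (Polynomial.nthRootsFinset m (1 : ZMod p)) fun r hr => by
      rw [Polynomial.mem_nthRootsFinset (by omega)] at hr
      rw [hF]
      exact ⟨by simp [hr], Polynomial.eval_derivative_C_mul_X_pow_sub_one_ne_zero
        (ZMod.two_mul_add_two_mul_ne_zero_of_mod_eq_one hcong) hr⟩
  refine ⟨S, hS.trans hζ.card_nthRootsFinset, fun y hy => ?_⟩
  rw [eq_secondDiffQuot_of_secondDiff_eq (m + 2) φ hφ ψ hψ,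
    aeval_secondDiffQuot_eq_secondDiffSlice]
  have h := Polynomial.eval_map_apply (p := F) PadicInt.Coe.ringHom y
  rw [map_secondDiffSlice, hroots y hy, map_zero] at h
  exact h

theorem padic_sod_splits (k p : ℕ) [Fact p.Prime] (hk : 4 ≤ k) (hodd : Odd p)
    (hcong : p % (k - 2) = 1)
    (hcase : k = p + 1 ∨ ¬ ∃ y : ZMod p, y ^ (k - 2) = (k - 1 : ZMod p))
    (φ : Polynomial ℚ_[p])
    (hφ : φ = Polynomial.C 2 * Polynomial.X ^ k - Polynomial.C (k : ℚ_[p]) * Polynomial.X ^ 2)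
    (ψ : MvPolynomial (Fin 3) ℚ_[p])
    (hψ : Polynomial.aeval (X 0 + X 1 - X 2 : MvPolynomial (Fin 3) ℚ_[p]) φ
          - Polynomial.aeval (X 0 : MvPolynomial (Fin 3) ℚ_[p]) φ
          - Polynomial.aeval (X 1 : MvPolynomial (Fin 3) ℚ_[p]) φ
          + Polynomial.aeval (X 2 : MvPolynomial (Fin 3) ℚ_[p]) φ
        = (X 0 - X 2) * (X 1 - X 2) * ψ) :
    ∀ x z : ℤ_[p], (∃ x' : ℤ_[p], x = p * x') → (∃ z' : ℤ_[p], z = p * z') →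
      ∃ S : Finset ℤ_[p], S.card = k - 2 ∧ ∀ y ∈ S,
        Polynomial.eval (y : ℚ_[p])
          (aeval (fun i : Fin 3 => if i = 0 then Polynomial.C (x : ℚ_[p])
            else if i = 1 then (Polynomial.X : Polynomial ℚ_[p])
            else Polynomial.C (z : ℚ_[p])) ψ) = 0 :=
  padic_sod_splits_general k p hcong φ hφ ψ hψ
end
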